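/- Let β > 0 and t > 0. Then ∫_t^∞ (r−t)^{−1/2} e^{−βr} dr = √(π/β) · e^{−βt}. Consequently, for the Γ(1/2,β) density μ(r) = √(β/π) r^{−1/2} e^{−βr} on (0,∞), the infinitesimal killing rate q(t) := μ(t) / ( (2πt)^{−1/2} ∫_t^∞ √(r/(r−t)) μ(r) dr ) equals the constant √(2β) for every t > 0. -/
import Mathlib


open MeasureTheory Set Real

/-- `∫_t^∞ (r−t)^{−1/2} e^{−βr} dr = √(π/β) e^{−βt}`, and consequently the
infinitesimal killing rate for the `Γ(1/2,β)` prior density `μ(r) = √(β/π) r^{−1/2} e^{−βr}`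
equals the constant `√(2β)`. -/
theorem gamma_half_prior_killing_rate (β t : ℝ) (hβ : 0 < β) (ht : 0 < t) :
    (∫ r in Set.Ioi t, (r - t) ^ (-(1:ℝ)/2) * Real.exp (-(β * r))) =
      Real.sqrt (Real.pi / β) * Real.exp (-(β * t)) ∧
    (Real.sqrt (β / Real.pi) * t ^ (-(1:ℝ)/2) * Real.exp (-(β * t))) /
      ((2 * Real.pi * t) ^ (-(1:ℝ)/2) *
        (∫ r in Set.Ioi t, Real.sqrt (r / (r - t)) *
          (Real.sqrt (β / Real.pi) * r ^ (-(1:ℝ)/2) * Real.exp (-(β * r))))) =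
      Real.sqrt (2 * β) := by
  have key : (∫ r in Set.Ioi t, (r - t) ^ (-(1:ℝ)/2) * Real.exp (-(β * r))) =
      Real.sqrt (Real.pi / β) * Real.exp (-(β * t)) := by
    have h1 : (∫ r in Set.Ioi t, (r - t) ^ (-(1:ℝ)/2) * Real.exp (-(β * r)))
        = ∫ s in Set.Ioi (0:ℝ), s ^ (-(1:ℝ)/2) * Real.exp (-(β * (s + t))) := by
      rw [← integral_indicator measurableSet_Ioi, ← integral_indicator measurableSet_Ioi,
        ← integral_add_right_eq_self
          (fun r => (Set.Ioi t).indicator (fun r => (r - t) ^ (-(1:ℝ)/2) * Real.exp (-(β * r))) r) t]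
      congr 1
      ext s
      simp only [Set.indicator_apply, Set.mem_Ioi, lt_add_iff_pos_left, add_sub_cancel_right]
    have h2 : ∀ s : ℝ, s ^ (-(1:ℝ)/2) * Real.exp (-(β * (s + t)))
        = Real.exp (-(β * t)) * (s ^ ((1:ℝ)/2 - 1) * Real.exp (-(β * s))) := by
      intro s
      rw [mul_add, neg_add, Real.exp_add]
      ring_nf
    simp_rw [h1, h2]
    rw [integral_const_mul, Real.integral_rpow_mul_exp_neg_mul_Ioi (by norm_num) hβ]
    rw [Real.Gamma_one_half_eq]
    rw [← Real.sqrt_eq_rpow, one_div, Real.sqrt_inv, Real.sqrt_div Real.pi_pos.le,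
      div_eq_mul_inv]
    ring
  refine ⟨key, ?_⟩
  have hint : (∫ r in Set.Ioi t, Real.sqrt (r / (r - t)) *
      (Real.sqrt (β / Real.pi) * r ^ (-(1:ℝ)/2) * Real.exp (-(β * r))))
      = Real.exp (-(β * t)) := by
    have hcong : (∫ r in Set.Ioi t, Real.sqrt (r / (r - t)) *
        (Real.sqrt (β / Real.pi) * r ^ (-(1:ℝ)/2) * Real.exp (-(β * r))))
        = ∫ r in Set.Ioi t, Real.sqrt (β / Real.pi) *
          ((r - t) ^ (-(1:ℝ)/2) * Real.exp (-(β * r))) := by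
      refine setIntegral_congr_fun measurableSet_Ioi (fun r hr => ?_)
      have hrt : t < r := hr
      have hr0 : 0 < r := ht.trans hrt
      have hd : 0 < r - t := by linarith
      have e1 : r ^ (-(1:ℝ)/2) = (Real.sqrt r)⁻¹ := by
        rw [neg_div, Real.rpow_neg hr0.le, ← Real.sqrt_eq_rpow]
      have e2 : (r - t) ^ (-(1:ℝ)/2) = (Real.sqrt (r - t))⁻¹ := by
        rw [neg_div, Real.rpow_neg hd.le, ← Real.sqrt_eq_rpow]
      rw [e1, e2, Real.sqrt_div hr0.le]
      have h1 : Real.sqrt r ≠ 0 := by positivity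
      have h2 : Real.sqrt (r - t) ≠ 0 := by positivity
      field_simp
    rw [hcong, integral_const_mul, key, ← mul_assoc, ← Real.sqrt_mul (by positivity)]
    have : β / Real.pi * (Real.pi / β) = 1 := by
      field_simp
    rw [this, Real.sqrt_one, one_mul]
  rw [hint]
  have hts : t ^ (-(1:ℝ)/2) = (Real.sqrt t)⁻¹ := by
    rw [neg_div, Real.rpow_neg ht.le, ← Real.sqrt_eq_rpow]
  have h2pt : (2 * Real.pi * t) ^ (-(1:ℝ)/2) = (Real.sqrt (2 * Real.pi) * Real.sqrt t)⁻¹ := by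
    rw [neg_div, Real.rpow_neg (by positivity), ← Real.sqrt_eq_rpow,
      Real.sqrt_mul (by positivity)]
  have hgoal : Real.sqrt (2 * β) = Real.sqrt (β / Real.pi) * Real.sqrt (2 * Real.pi) := by
    rw [← Real.sqrt_mul (by positivity)]
    congr 1
    field_simp
  rw [hts, h2pt, hgoal]
  have h1 : Real.sqrt t ≠ 0 := by positivity
  have h2 : Real.sqrt (2 * Real.pi) ≠ 0 := by positivity
  have h3 : Real.exp (-(β * t)) ≠ 0 := Real.exp_ne_zero _
  field_simp
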